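/- Let n ≥ 1 and let Q = {q₀, …, q_{n+1}} ⊂ ℚ[x₁, …, x_n] be the family where q₀ = n!·(x₁² + … + x_n²), q_j = e_j · q_{j−1} · q₀ for j = 1, …, n (e_j the j-th elementary symmetric polynomial), and q_{n+1} = q₀^s for some s ≥ ⌈(n+4)(n+1)/4⌉ + 1. Then Q is a realizable family of n-algebraic forms, and O(Q) = {g ∈ GL(n, ℚ) : q_i ∘ g = q_i for all i} is exactly the group of permutation matrices, isomorphic to the symmetric group Σ_n. -/

import Mathlib

open MvPolynomial

/-- Substitution of a matrix `g` into a multivariate polynomial: `(q ∘ g)(v) = q(g·v)`. -/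
noncomputable def polyComp {R : Type*} [CommSemiring R] {n : ℕ}
    (q : MvPolynomial (Fin n) R) (g : Matrix (Fin n) (Fin n) R) : MvPolynomial (Fin n) R :=
  bind₁ (fun i => ∑ j, C (g i j) * X j) q

/-- A family `Q 0, …, Q (r+1)` of `n`-algebraic forms (homogeneous polynomials) is
pre-realizable if `Q (r+1) = (Q 0)^s` for some `s ≥ max {n, ⌈deg(Q r)/deg(Q 0)⌉ + 1}`,
and `deg (Q (i+1)) − deg (Q i) > 1` for `i = 0, …, r`. -/
def PreRealizable (n r : ℕ) (Q : ℕ → MvPolynomial (Fin n) ℚ) : Prop :=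
  (∀ i ≤ r + 1, (Q i).IsHomogeneous (Q i).totalDegree) ∧
  (∃ s : ℕ, max n ((Q r).totalDegree ⌈/⌉ (Q 0).totalDegree + 1) ≤ s ∧ Q (r + 1) = Q 0 ^ s) ∧
  (∀ i ≤ r, (Q i).totalDegree + 1 < (Q (i + 1)).totalDegree)

/-- A family is realizable if it is pre-realizable and moreover
`Q 0 = λ₁v₁^d + … + λ_n v_n^d` with `d > 1` and all `λ_i ≠ 0`. -/
def Realizable (n r : ℕ) (Q : ℕ → MvPolynomial (Fin n) ℚ) : Prop :=
  PreRealizable n r Q ∧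
  ∃ (d : ℕ) (lam : Fin n → ℚ), 1 < d ∧ (∀ i, lam i ≠ 0) ∧
    Q 0 = ∑ i, C (lam i) * X i ^ d

/-- A permutation matrix: the matrix of the linear map sending the standard basis vector
`m_j` to `m_{σ(j)}` for some permutation `σ`. -/
def IsPermMatrix {n : ℕ} (g : Matrix (Fin n) (Fin n) ℚ) : Prop :=
  ∃ σ : Equiv.Perm (Fin n), ∀ i j, g i j = if i = σ j then 1 else 0

/-- The family of Example 2.5: `q₀ = n!·(x₁² + … + x_n²)` and
`q_j = e_j · q_{j−1} · q₀` for `j = 1, …, n`. -/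
noncomputable def symFam (n : ℕ) : ℕ → MvPolynomial (Fin n) ℚ
  | 0 => C (Nat.factorial n : ℚ) * ∑ i, X i ^ 2
  | (j + 1) => esymm (Fin n) ℚ (j + 1) * symFam n j * symFam n 0

/-!
Every `q_j` with `j ≤ n` is homogeneous of degree `(j + 1)(j + 4)/2`, which gives the degree
conditions of realizability. A matrix `g` fixing all `q_j` fixes `q₀` and hence, cancelling
`q_{j-1} q₀` in `(q_j ∘ g) = q_j`, every `e_j`. So the linear forms `ℓ_i = (g x)_i` have the same
elementary symmetric functions as the variables: `∏ (T - ℓ_i) = ∏ (T - x_i)` in `ℚ[x][T]`, whose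
roots show that the `ℓ_i` are a permutation of the `x_i`. Conversely every `q_j` is symmetric.
-/

theorem Multiset.eq_of_esymm_eq {R : Type*} [CommRing R] [IsDomain R] {s t : Multiset R}
    (hcard : card s = card t) (h : ∀ k ≤ card s, s.esymm k = t.esymm k) : s = t := by
  rw [← Polynomial.roots_multiset_prod_X_sub_C s, ← Polynomial.roots_multiset_prod_X_sub_C t,
    Multiset.prod_X_sub_X_eq_sum_esymm, Multiset.prod_X_sub_X_eq_sum_esymm, ← hcard]
  refine congrArg _ (Finset.sum_congr rfl fun k hk => ?_)
  rw [h k (Nat.lt_succ_iff.mp (Finset.mem_range.mp hk))]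

theorem Fintype.exists_perm_of_map_univ_eq {α β : Type*} [Fintype α] {f g : α → β}
    (hg : Function.Injective g)
    (h : Finset.univ.val.map f = Finset.univ.val.map g) :
    ∃ e : Equiv.Perm α, ∀ i, f i = g (e i) := by
  have hmem (i : α) : ∃ j, g j = f i := by
    obtain ⟨j, -, hj⟩ :=
      Multiset.mem_map.mp (h ▸ Multiset.mem_map_of_mem f (Finset.mem_univ_val i))
    exact ⟨j, hj⟩
  choose τ hτ using hmem
  have hτ_univ : Finset.univ.val.map τ = Finset.univ.val := by
    apply Multiset.map_injective hg
    rw [Multiset.map_map, ← h]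
    exact Multiset.map_congr rfl fun i _ => hτ i
  refine ⟨Equiv.ofBijective τ ((Multiset.bijective_iff_map_univ_eq_univ τ).mpr hτ_univ),
    fun i => (hτ i).symm⟩

namespace MvPolynomial

variable {σ R : Type*}

theorem isHomogeneous_esymm [CommSemiring R] [Fintype σ] (k : ℕ) :
    (esymm σ R k).IsHomogeneous k := by
  refine IsHomogeneous.sum _ _ _ fun t ht => ?_
  simpa [(Finset.mem_powersetCard.mp ht).2] using
    IsHomogeneous.prod t (fun i => (X i : MvPolynomial σ R)) (fun _ => 1)
      fun i _ => isHomogeneous_X R i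

theorem esymm_ne_zero [CommSemiring R] [Nontrivial R] [Fintype σ] {k : ℕ}
    (hk : k ≤ Fintype.card σ) : esymm σ R k ≠ 0 := by
  classical
  rw [← support_nonempty, support_esymm]
  exact (Finset.powersetCard_nonempty.mpr hk).image _

theorem IsHomogeneous.isHomogeneous_totalDegree [CommSemiring R] {p : MvPolynomial σ R} {d : ℕ}
    (hp : p.IsHomogeneous d) : p.IsHomogeneous p.totalDegree := by
  rcases eq_or_ne p 0 with rfl | hp0
  · exact isHomogeneous_zero _ _ _
  · rwa [hp.totalDegree hp0]

theorem coeff_single_sum_C_mul_X [CommSemiring R] [Fintype σ] [DecidableEq σ]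
    (a : σ → R) (j : σ) :
    coeff (Finsupp.single j 1) (∑ i, C (a i) * X i) = a j := by
  simp [coeff_sum, coeff_C_mul, coeff_X, Finsupp.single_left_inj one_ne_zero]

end MvPolynomial

section polyComp

variable {R : Type*} {n : ℕ}

theorem polyComp_eq_rename_of_perm [CommSemiring R] {g : Matrix (Fin n) (Fin n) R}
    (e : Equiv.Perm (Fin n)) (hg : ∀ i j, g i j = if i = e j then 1 else 0)
    (p : MvPolynomial (Fin n) R) : polyComp p g = rename e.symm p := by
  have hrow : (fun i => ∑ j, C (g i j) * X j) = X ∘ e.symm := by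
    funext i
    simp [hg, ← Equiv.symm_apply_eq]
  rw [polyComp, hrow, rename_eq_aeval]
  rfl

theorem isPermMatrix_of_polyComp_esymm_eq {g : Matrix (Fin n) (Fin n) ℚ}
    (h : ∀ k ≤ n, polyComp (esymm (Fin n) ℚ k) g = esymm (Fin n) ℚ k) : IsPermMatrix g := by
  classical
  set L : Fin n → MvPolynomial (Fin n) ℚ := fun i => ∑ j, C (g i j) * X j
  have hroots : Finset.univ.val.map L = Finset.univ.val.map X := by
    refine Multiset.eq_of_esymm_eq (by simp) fun k hk => ?_
    rw [← aeval_esymm_eq_multiset_esymm (Fin n) ℚ, ← esymm_eq_multiset_esymm]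
    exact h k (by simpa using hk)
  obtain ⟨τ, hτ⟩ := Fintype.exists_perm_of_map_univ_eq (X_injective (R := ℚ)) hroots
  refine ⟨τ.symm, fun i j => ?_⟩
  rw [← coeff_single_sum_C_mul_X (g i) j]
  simp [L, hτ, coeff_X, Finsupp.single_left_inj one_ne_zero, Equiv.eq_symm_apply, eq_comm]

end polyComp

section symFam

variable {n : ℕ}

def symFamDeg : ℕ → ℕ
  | 0 => 2
  | (j + 1) => (j + 1) + symFamDeg j + 2

theorem two_mul_symFamDeg (j : ℕ) : 2 * symFamDeg j = (j + 4) * (j + 1) := by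
  induction j with
  | zero => rfl
  | succ j ih => rw [symFamDeg]; linarith

theorem isHomogeneous_symFam : ∀ j, (symFam n j).IsHomogeneous (symFamDeg j)
  | 0 => by
    rw [symFam]
    exact (IsHomogeneous.sum _ _ _ fun i _ => isHomogeneous_X_pow i 2).C_mul _
  | (j + 1) => by
    rw [symFam]
    exact ((isHomogeneous_esymm _).mul (isHomogeneous_symFam j)).mul (isHomogeneous_symFam 0)

theorem symFam_zero_ne_zero (hn : 1 ≤ n) : symFam n 0 ≠ 0 := by
  intro h
  have := congrArg (eval fun _ => (1 : ℚ)) h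
  simp [symFam, Nat.factorial_ne_zero] at this
  omega

theorem symFam_ne_zero (hn : 1 ≤ n) : ∀ j ≤ n, symFam n j ≠ 0
  | 0, _ => symFam_zero_ne_zero hn
  | (j + 1), hj => by
    rw [symFam]
    exact mul_ne_zero (mul_ne_zero (esymm_ne_zero (by rwa [Fintype.card_fin]))
      (symFam_ne_zero hn j (by omega))) (symFam_zero_ne_zero hn)

theorem totalDegree_symFam (hn : 1 ≤ n) {j : ℕ} (hj : j ≤ n) :
    (symFam n j).totalDegree = symFamDeg j :=
  (isHomogeneous_symFam j).totalDegree (symFam_ne_zero hn j hj)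

theorem symFam_isSymmetric : ∀ j, (symFam n j).IsSymmetric
  | 0 => fun e => by
    simp only [symFam, map_mul, rename_C, map_sum, map_pow, rename_X]
    rw [Equiv.sum_comp e fun i => (X i : MvPolynomial (Fin n) ℚ) ^ 2]
  | (j + 1) => by
    rw [symFam]
    exact ((esymm_isSymmetric _ _ _).mul (symFam_isSymmetric j)).mul (symFam_isSymmetric 0)

theorem polyComp_esymm_eq_of_polyComp_symFam_eq (hn : 1 ≤ n) {g : Matrix (Fin n) (Fin n) ℚ}
    (h : ∀ j ≤ n, polyComp (symFam n j) g = symFam n j) :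
    ∀ k ≤ n, polyComp (esymm (Fin n) ℚ k) g = esymm (Fin n) ℚ k
  | 0, _ => by rw [esymm_zero, polyComp, map_one]
  | (j + 1), hj => by
    have hmul := h (j + 1) hj
    rw [symFam, polyComp, map_mul, map_mul, ← polyComp, ← polyComp, ← polyComp,
      h j (by omega), h 0 (by omega), mul_assoc, mul_assoc] at hmul
    exact mul_right_cancel₀ (mul_ne_zero (symFam_ne_zero hn j (by omega)) (symFam_zero_ne_zero hn))
      hmul

end symFam

noncomputable def symFamily (n s : ℕ) (i : ℕ) : MvPolynomial (Fin n) ℚ :=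
  if i ≤ n then symFam n i else symFam n 0 ^ s

section symFamily

variable {n s : ℕ}

theorem totalDegree_symFam_zero_pow (hn : 1 ≤ n) :
    (symFam n 0 ^ s).totalDegree = 2 * s := by
  rw [((isHomogeneous_symFam 0).pow s).totalDegree (pow_ne_zero s (symFam_zero_ne_zero hn)),
    symFamDeg, mul_comm]

theorem realizable_symFamily (hn : 1 ≤ n) (hs : ((n + 4) * (n + 1)) ⌈/⌉ 4 + 1 ≤ s) :
    Realizable n n (symFamily n s) := by
  have hdeg := two_mul_symFamDeg n
  have hn_le : 4 * n + 4 ≤ (n + 4) * (n + 1) := by nlinarith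
  generalize (n + 4) * (n + 1) = N at hs hdeg hn_le
  have hN : N ≤ 4 * (s - 1) := (ceilDiv_le_iff_le_mul four_pos).mp (Nat.le_sub_of_add_le hs)
  have hq₀ : symFamily n s 0 = ∑ i, C (n.factorial : ℚ) * X i ^ 2 := by
    rw [symFamily, if_pos n.zero_le, symFam, Finset.mul_sum]
  refine ⟨⟨fun i _ => ?_, ⟨s, ?_, ?_⟩, fun i hi => ?_⟩, 2, fun _ => n.factorial, one_lt_two,
    fun _ => by positivity, hq₀⟩
  · unfold symFamily
    split_ifs
    exacts [(isHomogeneous_symFam i).isHomogeneous_totalDegree,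
      ((isHomogeneous_symFam 0).pow s).isHomogeneous_totalDegree]
  · rw [symFamily, if_pos le_rfl, symFamily, if_pos n.zero_le, totalDegree_symFam hn le_rfl,
      totalDegree_symFam hn n.zero_le, symFamDeg]
    refine max_le (by omega) (Nat.add_le_of_le_sub (by omega) ?_)
    exact (ceilDiv_le_iff_le_mul two_pos).mpr (by omega)
  · simp [symFamily]
  · rcases hi.lt_or_eq with hi | rfl
    · rw [symFamily, if_pos hi.le, symFamily, if_pos (Nat.succ_le_of_lt hi),
        totalDegree_symFam hn hi.le, totalDegree_symFam hn hi, symFamDeg]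
      omega
    · rw [symFamily, if_pos le_rfl, symFamily, if_neg (by omega), totalDegree_symFam hn le_rfl,
        totalDegree_symFam_zero_pow hn]
      omega

theorem polyComp_symFamily_eq_iff (hn : 1 ≤ n) (g : Matrix (Fin n) (Fin n) ℚ) :
    (∀ i ≤ n + 1, polyComp (symFamily n s i) g = symFamily n s i) ↔ IsPermMatrix g := by
  constructor
  · intro h
    refine isPermMatrix_of_polyComp_esymm_eq (polyComp_esymm_eq_of_polyComp_symFam_eq hn ?_)
    intro j hj
    simpa [symFamily, hj] using h j (by omega)
  · rintro ⟨e, he⟩ i -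
    rw [polyComp_eq_rename_of_perm e he, symFamily]
    split_ifs
    exacts [symFam_isSymmetric i _, by rw [map_pow, symFam_isSymmetric 0]]

end symFamily

/-- Let `n ≥ 1` and let `Q = {q₀, …, q_{n+1}} ⊂ ℚ[x₁, …, x_n]` be the family
with `q₀ = n!·(x₁² + … + x_n²)`, `q_j = e_j·q_{j−1}·q₀` for `j = 1, …, n` (`e_j` the `j`-th
elementary symmetric polynomial), and `q_{n+1} = q₀^s` for some
`s ≥ ⌈(n+4)(n+1)/4⌉ + 1`. Then `Q` is a realizable family of `n`-algebraic forms and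
`O(Q) = {g ∈ GL(n, ℚ) : q_i ∘ g = q_i for all i}` is exactly the group of permutation
matrices, i.e. the symmetric group `Σ_n`. -/
theorem stmt_6 {n : ℕ} (hn : 1 ≤ n) (s : ℕ)
    (hs : ((n + 4) * (n + 1)) ⌈/⌉ 4 + 1 ≤ s)
    (Q : ℕ → MvPolynomial (Fin n) ℚ)
    (hQ : Q = fun i => if i ≤ n then symFam n i else symFam n 0 ^ s) :
    Realizable n n Q ∧
    {g : GL (Fin n) ℚ |
        ∀ i ≤ n + 1, polyComp (Q i) (g : Matrix (Fin n) (Fin n) ℚ) = Q i} =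
      {g : GL (Fin n) ℚ | IsPermMatrix (g : Matrix (Fin n) (Fin n) ℚ)} := by
  subst hQ
  exact ⟨realizable_symFamily hn hs, Set.ext fun g => polyComp_symFamily_eq_iff hn g⟩
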